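/- For all positive integers n and s with 1 ≤ s ≤ n−1, there exists an s-overlap cycle for W(n). -/

import Mathlib

/-- A word `w` over ℕ is a *weak order word* of length `n` if it has length `n`
and its set of letters is `{0, 1, …, h}` for some `h`. `weakOrders n` is the set
`W(n)` of all such words. -/
def weakOrders (n : ℕ) : Set (List ℕ) :=
  {w | w.length = n ∧ ∃ h : ℕ, w.toFinset = Finset.range (h + 1)}

/-- `IsOCycle s N C f` says `f 0, f 1, …, f (N-1)` is an `s`-overlap cycle for the
set `C` of strings: it is a cyclic ordering of all elements of `C` (each occurring
exactly once) in which the last `s` letters of each word equal the first `s`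
letters of the cyclically next word. -/
def IsOCycle (s N : ℕ) (C : Set (List ℕ)) (f : ℕ → List ℕ) : Prop :=
  (∀ i < N, f i ∈ C) ∧
    (∀ c ∈ C, ∃! i, i < N ∧ f i = c) ∧
    ∀ i < N, (f i).drop ((f i).length - s) = (f ((i + 1) % N)).take s

/-!
Regard each word `w ∈ W(n)` as an edge from its first `s` letters to its last `s` letters; an
`s`-ocycle is then an Eulerian circuit of this directed multigraph. Rotating words by `s` is a
permutation of `W(n)` that turns the edges leaving a vertex `u` into the edges entering `u`, so
the graph is balanced. From every vertex other than `0ˢ` there is an edge (append the letters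
missing below the largest letter, then zeros) that lowers a weight ordering vertices by their
largest letter and then by its last position, so every vertex reaches `0ˢ`; reversing words
reverses paths, so `0ˢ` reaches every vertex. In a balanced graph whose edges are mutually
reachable, a longest trail is closed by balance and contains every edge by connectivity.
-/

open Relation

section Eulerian

open Finset

variable {E V : Type*} (σ τ : E → V)

structure IsTrail (G : Finset E) (t : List E) : Prop where
  nodup : t.Nodup
  subset : ∀ e ∈ t, e ∈ G
  isChain : t.IsChain fun a b => τ a = σ b

/-- The target of each edge of `t` is the source of the next one, and the target of the last
edge is the source of the first. -/
def IsCyclicChain (t : List E) : Prop := t.map τ = (t.map σ).rotate 1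

def Adj (G : Set E) (u v : V) : Prop := ∃ e ∈ G, σ e = u ∧ τ e = v

variable {σ τ} {G : Finset E} {t : List E}

lemma isChain_iff_map_dropLast_eq :
    t.IsChain (fun a b => τ a = σ b) ↔ t.dropLast.map τ = t.tail.map σ := by
  rw [List.isChain_iff_forall₂, ← List.forall₂_eq_eq_eq, List.forall₂_map_left_iff,
    List.forall₂_map_right_iff]

lemma IsCyclicChain.isChain (h : IsCyclicChain σ τ t) : t.IsChain fun a b => τ a = σ b := by
  rw [isChain_iff_map_dropLast_eq, List.map_dropLast, h]
  cases t <;> simp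

lemma IsCyclicChain.getLast?_head? (h : IsCyclicChain σ τ t) :
    ∀ a ∈ t.getLast?, ∀ b ∈ t.head?, τ a = σ b := by
  cases t with
  | nil => simp
  | cons b l =>
    rintro a ha _ ⟨⟩
    have := congrArg List.getLast? h
    rw [List.getLast?_map, ha] at this
    simpa using this

lemma isCyclicChain_of_isChain (h : t.IsChain fun a b => τ a = σ b)
    (hlink : ∀ a ∈ t.getLast?, ∀ b ∈ t.head?, τ a = σ b) : IsCyclicChain σ τ t := by
  rcases t.eq_nil_or_concat' with rfl | ⟨l, a, rfl⟩
  · simp [IsCyclicChain]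
  rw [isChain_iff_map_dropLast_eq, List.dropLast_concat] at h
  cases l with
  | nil => simpa [IsCyclicChain] using hlink
  | cons b l =>
    have hab : τ a = σ b := hlink a (List.getLast?_concat ..) b rfl
    rw [IsCyclicChain, List.map_append, h]
    simp [hab]

lemma IsCyclicChain.rotate (h : IsCyclicChain σ τ t) (k : ℕ) :
    IsCyclicChain σ τ (t.rotate k) := by
  rw [IsCyclicChain, List.map_rotate, List.map_rotate, h, List.rotate_rotate, List.rotate_rotate,
    add_comm]

lemma IsCyclicChain.mem_map_of_mem (h : IsCyclicChain σ τ t) {e : E} (he : e ∈ t) :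
    τ e ∈ t.map σ := by
  rw [← List.mem_rotate (n := 1), ← h]
  exact List.mem_map_of_mem he

lemma IsTrail.concat (ht : IsTrail σ τ G t) {e : E} (he : e ∈ G) (het : e ∉ t)
    (hlink : ∀ a ∈ t.getLast?, τ a = σ e) : IsTrail σ τ G (t ++ [e]) where
  nodup := List.nodup_append.2 ⟨ht.nodup, List.nodup_singleton e,
    by simpa using fun a ha (hae : a = e) => het (hae ▸ ha)⟩
  subset := by simpa [or_imp, forall_and, he] using ht.subset
  isChain := List.isChain_append.2 ⟨ht.isChain, List.isChain_singleton e, by simpa using hlink⟩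

lemma IsTrail.rotate (ht : IsTrail σ τ G t) (hcyc : IsCyclicChain σ τ t) (k : ℕ) :
    IsTrail σ τ G (t.rotate k) where
  nodup := List.nodup_rotate.2 ht.nodup
  subset e he := ht.subset e (List.mem_rotate.1 he)
  isChain := (hcyc.rotate k).isChain

lemma IsCyclicChain.exists_exit (hcyc : IsCyclicChain σ τ t) {u v : V}
    (huv : ReflTransGen (Adj σ τ G) u v) (hu : u ∈ t.map σ) {e : E} (he : e ∈ G) (het : e ∉ t)
    (hev : σ e = v) : ∃ e ∈ G, e ∉ t ∧ σ e ∈ t.map σ := by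
  induction huv using ReflTransGen.head_induction_on with
  | refl => exact ⟨e, he, het, hev ▸ hu⟩
  | head hstep _ ih =>
    obtain ⟨x, hx, rfl, rfl⟩ := hstep
    by_cases hxt : x ∈ t
    · exact ih (hcyc.mem_map_of_mem hxt)
    · exact ⟨x, hx, hxt, hu⟩

lemma IsTrail.exists_rotate_concat (ht : IsTrail σ τ G t) (hcyc : IsCyclicChain σ τ t)
    (hconn : ∀ a ∈ G, ∀ b ∈ G, ReflTransGen (Adj σ τ G) (σ a) (σ b)) {e : E} (he : e ∈ G)
    (het : e ∉ t) : ∃ e ∈ G, e ∉ t ∧ ∃ k, ∀ a ∈ (t.rotate k).getLast?, τ a = σ e := by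
  cases t with
  | nil => exact ⟨e, he, het, 0, by simp⟩
  | cons b l =>
    obtain ⟨e', he', he't, hσ⟩ :=
      hcyc.exists_exit (hconn b (ht.subset b (by simp)) e he) (by simp) he het rfl
    obtain ⟨a, ha, hae⟩ := List.mem_map.1 hσ
    obtain ⟨k, hk, rfl⟩ := List.getElem_of_mem ha
    refine ⟨e', he', he't, k, fun x hx => ?_⟩
    rw [← hae]
    exact (hcyc.rotate k).getLast?_head? x hx _ (by rw [List.head?_rotate hk]; simp)

lemma IsTrail.length_le [DecidableEq E] (ht : IsTrail σ τ G t) : t.length ≤ #G := by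
  rw [← List.toFinset_card_of_nodup ht.nodup]
  exact card_le_card fun e he => ht.subset e (List.mem_toFinset.1 he)

variable [DecidableEq E] [DecidableEq V]

variable (σ τ) in
def IsBalanced (G : Finset E) : Prop := ∀ v, #{e ∈ G | σ e = v} = #{e ∈ G | τ e = v}

lemma card_filter_toFinset (ht : t.Nodup) (f : E → V) (v : V) :
    #{e ∈ t.toFinset | f e = v} = (t.map f).count v := by
  rw [List.count_eq_countP, List.countP_map, List.countP_eq_length_filter,
    ← List.toFinset_card_of_nodup (ht.filter _)]
  congr 1
  ext
  simp [Function.comp_def]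

lemma IsTrail.exists_concat (hbal : IsBalanced σ τ G) (ht : IsTrail σ τ G t)
    (hcyc : ¬ IsCyclicChain σ τ t) : ∃ e ∈ G, e ∉ t ∧ ∀ a ∈ t.getLast?, τ a = σ e := by
  obtain ⟨b, l, rfl⟩ :=
    List.exists_cons_of_ne_nil (l := t) (by rintro rfl; simp [IsCyclicChain] at hcyc)
  set v := τ ((b :: l).getLast (List.cons_ne_nil b l))
  have hbv : σ b ≠ v := fun h => hcyc <| isCyclicChain_of_isChain ht.isChain <| by
    simp [← h, v, List.getLast?_eq_some_getLast]
  -- The trail enters `v` once more than it leaves it: it ends at `v` but starts elsewhere.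
  have hcount : ((b :: l).map σ).count v < ((b :: l).map τ).count v := by
    conv_rhs => rw [← List.dropLast_append_getLast (List.cons_ne_nil b l), List.map_append,
      isChain_iff_map_dropLast_eq.1 ht.isChain]
    simp [hbv, v]
  have hsub : (b :: l).toFinset ⊆ G := fun e he => ht.subset e (List.mem_toFinset.1 he)
  have hlt : #{e ∈ (b :: l).toFinset | σ e = v} < #{e ∈ G | σ e = v} := by
    rw [card_filter_toFinset ht.nodup, hbal]
    exact hcount.trans_le <|
      card_filter_toFinset ht.nodup τ v ▸ card_le_card (filter_subset_filter _ hsub)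
  obtain ⟨e, he, het⟩ := exists_mem_notMem_of_card_lt_card hlt
  rw [mem_filter] at he
  refine ⟨e, he.1, fun h => het (mem_filter.2 ⟨List.mem_toFinset.2 h, he.2⟩), ?_⟩
  simp [List.getLast?_eq_some_getLast, he.2, v]

theorem exists_eulerian_circuit (hbal : IsBalanced σ τ G)
    (hconn : ∀ a ∈ G, ∀ b ∈ G, ReflTransGen (Adj σ τ G) (σ a) (σ b)) :
    ∃ t : List E, t.Nodup ∧ t.toFinset = G ∧ IsCyclicChain σ τ t := by
  obtain ⟨t, ht, hmax⟩ := (measure fun t : List E => #G - t.length).wf.has_min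
    {t | IsTrail σ τ G t} ⟨[], ⟨List.nodup_nil, by simp, List.isChain_nil⟩⟩
  have not_longer : ∀ t', IsTrail σ τ G t' → t'.length ≠ t.length + 1 := fun t' ht' hlen =>
    hmax t' ht' (by have := ht'.length_le; change #G - t'.length < #G - t.length; omega)
  have hcyc : IsCyclicChain σ τ t := by
    by_contra hcyc
    obtain ⟨e, he, het, hlink⟩ := ht.exists_concat hbal hcyc
    exact not_longer _ (ht.concat he het hlink) (by simp)
  refine ⟨t, ht.nodup, ?_, hcyc⟩
  by_contra hne
  have hsub : t.toFinset ⊆ G := fun e he => ht.subset e (List.mem_toFinset.1 he)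
  obtain ⟨e, he, het⟩ := exists_of_ssubset (hsub.ssubset_of_ne hne)
  obtain ⟨e', he', he't, k, hlink⟩ := ht.exists_rotate_concat hcyc hconn he (by simpa using het)
  exact not_longer _ ((ht.rotate hcyc k).concat he' (by simpa using he't) hlink) (by simp)

end Eulerian

section Rotate

variable {α : Type*} {l : List α} {s : ℕ}

lemma rtake_eq_take_rotate (hs : s ≤ l.length) : l.rtake s = (l.rotate (l.length - s)).take s := by
  rw [List.rotate_eq_drop_append_take (Nat.sub_le _ _), List.take_left' (by simp; omega)]
  rfl

lemma rotate_rotate_of_add_eq_length {i j : ℕ} (h : i + j = l.length) :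
    (l.rotate i).rotate j = l := by
  rw [List.rotate_rotate, h, List.rotate_length]

end Rotate

section WeakOrders

open List

lemma weakOrders_finite (n : ℕ) : (weakOrders n).Finite := by
  refine ((List.finite_length_eq (Fin n) n).image (map Fin.val)).subset ?_
  rintro w ⟨hlen, h, hw⟩
  have hlt : ∀ x ∈ w, x < n := fun x hx => by
    have hxh := Finset.mem_range.1 (hw ▸ mem_toFinset.2 hx)
    have := hw ▸ w.toFinset_card_le
    simp only [Finset.card_range] at this
    omega
  lift w to List (Fin n) using hlt
  exact ⟨w, by simpa using hlen, rfl⟩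

variable {n s : ℕ} {w : List ℕ}

lemma rotate_mem_weakOrders (hw : w ∈ weakOrders n) (k : ℕ) : w.rotate k ∈ weakOrders n := by
  obtain ⟨hlen, h, hw⟩ := hw
  exact ⟨by rw [length_rotate, hlen], h, by rw [← hw, toFinset_eq_of_perm _ _ (rotate_perm w k)]⟩

lemma reverse_mem_weakOrders (hw : w ∈ weakOrders n) : w.reverse ∈ weakOrders n := by
  obtain ⟨hlen, h, hw⟩ := hw
  exact ⟨by rw [length_reverse, hlen], h, by rw [toFinset_reverse, hw]⟩

lemma append_mem_weakOrders {u x : List ℕ} {m : ℕ} (hlen : u.length + x.length = n)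
    (hmu : m ∈ u) (hum : ∀ y ∈ u, y ≤ m) (hxm : ∀ y ∈ x, y < m)
    (hmissing : ∀ y < m, y ∉ u → y ∈ x) : u ++ x ∈ weakOrders n := by
  refine ⟨by rw [length_append, hlen], m, Finset.ext fun y => ?_⟩
  simp only [mem_toFinset, mem_append, Finset.mem_range]
  refine ⟨fun hy => hy.elim (fun hy => Nat.lt_succ_of_le (hum y hy))
    (fun hy => (hxm y hy).trans (Nat.lt_succ_self m)), fun hy => ?_⟩
  by_cases hyu : y ∈ u
  · exact Or.inl hyu
  · refine Or.inr (hmissing y ?_ hyu)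
    exact lt_of_le_of_ne (Nat.le_of_lt_succ hy) (by rintro rfl; exact hyu hmu)

lemma isBalanced_weakOrders (hs : s ≤ n) :
    IsBalanced (take s) (rtake · s) (weakOrders_finite n).toFinset := by
  intro v
  refine Finset.card_nbij' (·.rotate s) (·.rotate (n - s)) ?_ ?_ ?_ ?_ <;> intro w hw <;>
    simp only [Finset.coe_filter, Set.Finite.mem_toFinset, Set.mem_ofPred_eq] at hw ⊢
  · obtain ⟨hw, rfl⟩ := hw
    refine ⟨rotate_mem_weakOrders hw s, ?_⟩
    rw [rtake_eq_take_rotate (by simp [hw.1, hs]), length_rotate,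
      rotate_rotate_of_add_eq_length (by rw [hw.1]; omega)]
  · obtain ⟨hw, rfl⟩ := hw
    exact ⟨rotate_mem_weakOrders hw _, by rw [rtake_eq_take_rotate (hw.1 ▸ hs), hw.1]⟩
  all_goals exact rotate_rotate_of_add_eq_length (by rw [hw.1.1]; omega)

/-- `weight s u = max_{i < s} (u_i * s + i)` ranks `u` by its largest letter and then by the
last position of that letter. -/
def weight (s : ℕ) (u : List ℕ) : ℕ := (Finset.range s).sup fun i => u.getD i 0 * s + i

lemma le_weight (u : List ℕ) {i : ℕ} (hi : i < s) : u.getD i 0 * s + i ≤ weight s u :=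
  Finset.le_sup (f := fun i => u.getD i 0 * s + i) (Finset.mem_range.2 hi)

lemma weight_drop_append_lt {u x : List ℕ} {a : ℕ} (hu : u.length = s) (hx : x ≠ [])
    (ha : a ∈ u) (hxa : ∀ y ∈ x, y < a) : weight s ((u ++ x).drop x.length) < weight s u := by
  obtain ⟨i, hi, rfl⟩ := getElem_of_mem ha
  have hai : u[i] * s + i ≤ weight s u := by
    have := le_weight (s := s) u (i := i) (by omega)
    rwa [getD_eq_getElem _ _ hi] at this
  have hsa : s ≤ u[i] * s := Nat.le_mul_of_pos_left s (Nat.zero_lt_of_lt (hxa _ (head_mem hx)))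
  have hxlen : 0 < x.length := length_pos_iff.2 hx
  rw [weight, Finset.sup_lt_iff (by simp; omega)]
  intro j hj
  rw [Finset.mem_range] at hj
  -- Letters kept from `u` move `x.length` places left; the new letters are all below `a`.
  rcases lt_or_ge (j + x.length) s with h | h
  · have hget : ((u ++ x).drop x.length).getD j 0 = u.getD (j + x.length) 0 := by
      simp [getD_eq_getElem?_getD, getElem?_append_left (hu ▸ h), Nat.add_comm]
    have := le_weight u h
    rw [hget]
    omega
  · have hget : ((u ++ x).drop x.length).getD j 0 = x.getD (j + x.length - s) 0 := by
      simp [getD_eq_getElem?_getD, getElem?_append_right (hu ▸ h), Nat.add_comm, hu]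
    have hlt : j + x.length - s < x.length := by omega
    rw [hget, getD_eq_getElem _ _ hlt]
    have := Nat.mul_le_mul_right s (Nat.le_sub_one_of_lt (hxa _ (getElem_mem hlt)))
    rw [Nat.sub_one_mul] at this
    omega

lemma length_filter_not_mem_take_le (hw : w ∈ weakOrders n) {m : ℕ} (hm : m ∈ w.take s) :
    ((range m).filter (· ∉ w.take s)).length ≤ n - s := by
  obtain ⟨hlen, h, hwh⟩ := hw
  have hmh := Finset.mem_range.1 (hwh ▸ mem_toFinset.2 (mem_of_mem_take hm))
  have hsub : (range m).filter (· ∉ w.take s) ⊆ w.drop s := fun y hy => by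
    simp only [mem_filter, mem_range, decide_eq_true_eq] at hy
    have hyw : y ∈ w := mem_toFinset.1 (hwh ▸ Finset.mem_range.2 (by omega))
    rw [← take_append_drop s w, mem_append] at hyw
    exact hyw.resolve_left hy.2
  exact ((nodup_range.filter _).subperm hsub).length_le.trans (by simp [hlen])

lemma exists_rtake_weight_lt (hsn : s < n) (hw : w ∈ weakOrders n)
    (h0 : w.take s ≠ replicate s 0) :
    ∃ w' ∈ weakOrders n, w'.take s = w.take s ∧ weight s (w'.rtake s) < weight s (w.take s) := by
  set u := w.take s
  have hulen : u.length = s := by simp [u, hw.1, hsn.le]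
  obtain ⟨x, hxu, hx0⟩ : ∃ x ∈ u, x ≠ 0 := by
    by_contra! hall
    exact h0 (eq_replicate_iff.2 ⟨hulen, hall⟩)
  obtain ⟨m, hmu, hmax⟩ := u.toFinset.exists_max_image id ⟨x, mem_toFinset.2 hxu⟩
  simp only [mem_toFinset, id] at hmu hmax
  have hm0 : 0 < m := Nat.pos_of_ne_zero (by have := hmax x hxu; omega)
  set missing := (range m).filter (· ∉ u)
  have hmissing : missing.length ≤ n - s := length_filter_not_mem_take_le hw hmu
  set fill := missing ++ replicate (n - s - missing.length) 0
  have hfill : fill.length = n - s := by simp only [fill, length_append, length_replicate]; omega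
  have hfill_lt : ∀ y ∈ fill, y < m := by
    intro y hy
    simp only [fill, missing, mem_append, mem_filter, mem_range, mem_replicate] at hy
    omega
  refine ⟨u ++ fill, append_mem_weakOrders (by omega) hmu hmax hfill_lt fun y hy hyu =>
    mem_append_left _ (mem_filter.2 ⟨mem_range.2 hy, by simpa using hyu⟩), take_left' hulen, ?_⟩
  have hrtake : (u ++ fill).rtake s = (u ++ fill).drop fill.length := by simp [rtake, hulen, hfill]
  rw [hrtake]
  exact weight_drop_append_lt hulen (ne_nil_of_length_pos (by omega)) hmu hfill_lt

lemma reflTransGen_take_replicate_zero (hsn : s < n) (hw : w ∈ weakOrders n) :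
    ReflTransGen (Adj (take s) (rtake · s) (weakOrders n)) (w.take s) (replicate s 0) := by
  induction hk : weight s (w.take s) using Nat.strong_induction_on generalizing w with
  | _ k ih =>
    by_cases h0 : w.take s = replicate s 0
    · rw [h0]
    obtain ⟨w', hw', htake, hlt⟩ := exists_rtake_weight_lt hsn hw h0
    have hrtake := rtake_eq_take_rotate (hw'.1 ▸ hsn.le)
    rw [hw'.1] at hrtake
    refine ReflTransGen.head ⟨w', hw', htake, hrtake⟩ ?_
    exact ih _ (hk ▸ hrtake ▸ hlt) (rotate_mem_weakOrders hw' _) rfl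

lemma adj_reverse {u v : List ℕ} (h : Adj (take s) (rtake · s) (weakOrders n) u v) :
    Adj (take s) (rtake · s) (weakOrders n) v.reverse u.reverse := by
  obtain ⟨w, hw, rfl, rfl⟩ := h
  exact ⟨w.reverse, reverse_mem_weakOrders hw, by simp [rtake_eq_reverse_take_reverse],
    by simp [rtake_eq_reverse_take_reverse]⟩

lemma reflTransGen_take (hsn : s < n) {a b : List ℕ} (ha : a ∈ weakOrders n)
    (hb : b ∈ weakOrders n) :
    ReflTransGen (Adj (take s) (rtake · s) (weakOrders n)) (a.take s) (b.take s) := by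
  have hb' := rotate_mem_weakOrders (reverse_mem_weakOrders hb) (n - s)
  have hrev : (b.reverse.rotate (n - s)).take s = (b.take s).reverse := by
    rw [← hb.1, ← length_reverse, ← rtake_eq_take_rotate (by simp [hb.1, hsn.le]),
      rtake_eq_reverse_take_reverse, reverse_reverse]
  have := (reflTransGen_take_replicate_zero hsn hb').swap.lift reverse fun _ _ => adj_reverse
  refine (reflTransGen_take_replicate_zero hsn ha).trans ?_
  simpa only [Function.onFun, hrev, reverse_reverse, reverse_replicate] using this

end WeakOrders

lemma isOCycle_getD_of_isCyclicChain {s : ℕ} {C : Set (List ℕ)} {t : List (List ℕ)}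
    (hnd : t.Nodup) (hC : ∀ c, c ∈ t ↔ c ∈ C)
    (hcyc : IsCyclicChain (List.take s) (List.rtake · s) t) :
    IsOCycle s t.length C (fun i => t.getD i []) := by
  refine ⟨fun i hi => ?_, fun c hc => ?_, fun i hi => ?_⟩ <;> dsimp only
  · rw [List.getD_eq_getElem _ _ hi]
    exact (hC _).1 (List.getElem_mem hi)
  · obtain ⟨i, hi, rfl⟩ := List.getElem_of_mem ((hC c).2 hc)
    refine ⟨i, ⟨hi, List.getD_eq_getElem _ _ hi⟩, fun j ⟨hj, hji⟩ => ?_⟩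
    rw [List.getD_eq_getElem _ _ hj] at hji
    exact hnd.getElem_inj_iff.1 hji
  · have hnext : (i + 1) % t.length < t.length := Nat.mod_lt _ (by omega)
    have := congrArg (·[i]?) hcyc
    rw [List.getElem?_rotate (by simpa using hi), List.getElem?_map, List.getElem?_map,
      List.length_map, List.getElem?_eq_getElem hi, List.getElem?_eq_getElem hnext] at this
    simp only [Option.map_some, Option.some_inj] at this
    rw [List.getD_eq_getElem _ _ hi, List.getD_eq_getElem _ _ hnext]
    exact this

theorem exists_ocycle_weakOrders_general (n s : ℕ) (hn : 0 < n)
    (hs2 : s ≤ n - 1) :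
    ∃ f : ℕ → List ℕ, IsOCycle s (Nat.card (weakOrders n)) (weakOrders n) f := by
  have hsn : s < n := by omega
  set G := (weakOrders_finite n).toFinset
  have hconn : ∀ a ∈ G, ∀ b ∈ G,
      ReflTransGen (Adj (List.take s) (List.rtake · s) G) (a.take s) (b.take s) := by
    simp only [G, Set.Finite.coe_toFinset, Set.Finite.mem_toFinset]
    exact fun a ha b hb => reflTransGen_take hsn ha hb
  obtain ⟨t, hnd, htG, hcyc⟩ := exists_eulerian_circuit (isBalanced_weakOrders hsn.le) hconn
  have hmem : ∀ c, c ∈ t ↔ c ∈ weakOrders n := fun c => by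
    rw [← List.mem_toFinset, htG, Set.Finite.mem_toFinset]
  have hcard : Nat.card (weakOrders n) = t.length := by
    rw [Nat.card_coe_set_eq, Set.ncard_eq_toFinset_card _ (weakOrders_finite n), ← htG,
      List.toFinset_card_of_nodup hnd]
  exact ⟨_, hcard ▸ isOCycle_getD_of_isCyclicChain hnd hmem hcyc⟩

/-- For all positive integers `n, s` with `1 ≤ s ≤ n - 1`, there exists an
`s`-overlap cycle for `W(n)`. -/
theorem exists_ocycle_weakOrders (n s : ℕ) (hn : 0 < n) (hs1 : 1 ≤ s)
    (hs2 : s ≤ n - 1) :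
    ∃ f : ℕ → List ℕ, IsOCycle s (Nat.card (weakOrders n)) (weakOrders n) f :=
  exists_ocycle_weakOrders_general n s hn hs2
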